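/- arXiv:2306.14189 — 6 statements merged into one kernel-verified Lean document; each statement's English description precedes it below -/
import Mathlib

section
/- Let E be a right module over the real quaternions ℍ and F a left module over ℍ, both also real vector spaces on which the real scalars act compatibly with the quaternionic actions. Let Φ : E × F → ℝ be additive in each variable, satisfy Φ(x·q, y) = Φ(x, q·y) for all q ∈ ℍ, x ∈ E, y ∈ F (balance property), and satisfy rΦ(x, y) = Φ(rx, y) = Φ(x, ry) for all r ∈ ℝ. Then there exists a map Ψ : F × E → ℍ, additive in each variable, satisfying Ψ(q·y, x) = qΨ(y, x) and Ψ(y, x·q) = Ψ(y, x)q for all q ∈ ℍ, such that Φ(x, y) = Re(Ψ(y, x)) for all x ∈ E, y ∈ F. -/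
/-!
The pairing `(a, p) ↦ re (a * p)` on `ℍ` is nondegenerate, so for fixed `x` and `y` the real linear
functional `a ↦ Φ (x, a • y)` is `a ↦ re (a * Ψ (y, x))` for exactly one quaternion `Ψ (y, x)`.
By this uniqueness every required identity for `Ψ` reduces to one for `Φ`: left linearity to
`(a * q) • y = a • q • y`, right linearity to the balance property together with
`re (q * (a * p)) = re (a * p * q)`.
-/

open scoped Quaternion

namespace Quaternion

variable {R : Type*} [CommRing R]

variable (R) in
@[simps]
def i : ℍ[R] := ⟨0, 1, 0, 0⟩

variable (R) in
@[simps]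
def j : ℍ[R] := ⟨0, 0, 1, 0⟩

variable (R) in
@[simps]
def k : ℍ[R] := ⟨0, 0, 0, 1⟩

theorem re_smul_one_add_im_smul (a : ℍ[R]) :
    a.re • (1 : ℍ[R]) + a.imI • i R + a.imJ • j R + a.imK • k R = a := by
  ext <;> simp

theorem re_mul_comm (a b : ℍ[R]) : (a * b).re = (b * a).re := by
  simp only [re_mul]; ring

theorem ext_re_mul {p q : ℍ[R]} (h : ∀ a : ℍ[R], (a * p).re = (a * q).re) : p = q := by
  ext
  · simpa using h 1
  · simpa [re_mul] using h (i R)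
  · simpa [re_mul] using h (j R)
  · simpa [re_mul] using h (k R)

/-- The quaternion representing `g` under the pairing `(a, p) ↦ re (a * p)`. -/
def dualRepr (g : ℍ[R] →ₗ[R] R) : ℍ[R] :=
  g 1 • 1 - g (i R) • i R - g (j R) • j R - g (k R) • k R

theorem re_mul_dualRepr (g : ℍ[R] →ₗ[R] R) (a : ℍ[R]) : (a * dualRepr g).re = g a := by
  conv_rhs => rw [← re_smul_one_add_im_smul a]
  simp only [dualRepr, mul_sub, mul_smul_comm, mul_one, re_sub, re_smul, re_mul, re_i, imI_i,
    imJ_i, imK_i, re_j, imI_j, imJ_j, imK_j, re_k, imI_k, imJ_k, imK_k, map_add, map_smul,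
    smul_eq_mul]
  ring

end Quaternion

open Quaternion

namespace LinearMap

variable {R F : Type*} [CommRing R] [AddCommMonoid F] [Module ℍ[R] F] [Module R F]
  [IsScalarTower R ℍ[R] F]

def quaternionLift (f : F →ₗ[R] R) : F →ₗ[ℍ[R]] ℍ[R] where
  toFun y := dualRepr (f ∘ₗ smulRight LinearMap.id y)
  map_add' y₁ y₂ := ext_re_mul fun a => by
    simp only [mul_add, re_add, re_mul_dualRepr, comp_apply, smulRight_apply, id_apply, smul_add,
      map_add]
  map_smul' q y := ext_re_mul fun a => by
    simp only [RingHom.id_apply, smul_eq_mul, ← mul_assoc, re_mul_dualRepr, comp_apply,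
      smulRight_apply, id_apply, mul_smul]

theorem re_mul_quaternionLift (f : F →ₗ[R] R) (a : ℍ[R]) (y : F) :
    (a * f.quaternionLift y).re = f (a • y) :=
  re_mul_dualRepr _ a

@[simp]
theorem re_quaternionLift (f : F →ₗ[R] R) (y : F) : (f.quaternionLift y).re = f y := by
  simpa using f.re_mul_quaternionLift 1 y

theorem quaternionLift_add (f g : F →ₗ[R] R) :
    (f + g).quaternionLift = f.quaternionLift + g.quaternionLift :=
  ext fun y => ext_re_mul fun a => by
    simp only [add_apply, mul_add, re_add, re_mul_quaternionLift]

theorem quaternionLift_apply_mul {f g : F →ₗ[R] R} (q : ℍ[R]) (h : ∀ y, g y = f (q • y))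
    (y : F) : g.quaternionLift y = f.quaternionLift y * q :=
  ext_re_mul fun a => by
    rw [re_mul_quaternionLift, ← mul_assoc, re_mul_comm, ← mul_assoc, re_mul_quaternionLift, h,
      mul_smul]

end LinearMap

theorem balanced_bilinear_form_is_re_of_H_linear_form_general
    (E F : Type*) [AddCommGroup E] [AddCommGroup F]
    [Module ℝ F]
    [Module (Quaternion ℝ)ᵐᵒᵖ E] [Module (Quaternion ℝ) F]
    [IsScalarTower ℝ (Quaternion ℝ) F]
    (Φ : E × F → ℝ)
    (hadd₁ : ∀ (x₁ x₂ : E) (y : F), Φ (x₁ + x₂, y) = Φ (x₁, y) + Φ (x₂, y))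
    (hadd₂ : ∀ (x : E) (y₁ y₂ : F), Φ (x, y₁ + y₂) = Φ (x, y₁) + Φ (x, y₂))
    (hbal : ∀ (q : Quaternion ℝ) (x : E) (y : F),
      Φ (MulOpposite.op q • x, y) = Φ (x, q • y))
    (hr₂ : ∀ (r : ℝ) (x : E) (y : F), r * Φ (x, y) = Φ (x, r • y)) :
    ∃ Ψ : F × E → Quaternion ℝ,
      (∀ (y₁ y₂ : F) (x : E), Ψ (y₁ + y₂, x) = Ψ (y₁, x) + Ψ (y₂, x)) ∧
      (∀ (y : F) (x₁ x₂ : E), Ψ (y, x₁ + x₂) = Ψ (y, x₁) + Ψ (y, x₂)) ∧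
      (∀ (q : Quaternion ℝ) (y : F) (x : E), Ψ (q • y, x) = q * Ψ (y, x)) ∧
      (∀ (q : Quaternion ℝ) (y : F) (x : E),
        Ψ (y, MulOpposite.op q • x) = Ψ (y, x) * q) ∧
      (∀ (x : E) (y : F), Φ (x, y) = (Ψ (y, x)).re) := by
  let Φₗ (x : E) : F →ₗ[ℝ] ℝ :=
    { toFun y := Φ (x, y)
      map_add' := hadd₂ x
      map_smul' r y := (hr₂ r x y).symm }
  have Φₗ_add (x₁ x₂ : E) : Φₗ (x₁ + x₂) = Φₗ x₁ + Φₗ x₂ := LinearMap.ext (hadd₁ x₁ x₂)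
  refine ⟨fun p => (Φₗ p.2).quaternionLift p.1, fun y₁ y₂ x => map_add _ y₁ y₂,
    fun y x₁ x₂ => ?_, fun q y x => map_smul _ q y, fun q y x => ?_,
    fun x y => ((Φₗ x).re_quaternionLift y).symm⟩
  · simp only [Φₗ_add, LinearMap.quaternionLift_add, LinearMap.add_apply]
  · exact LinearMap.quaternionLift_apply_mul q (hbal q x) y

/-- Every balanced ℝ-bilinear form `Φ : E × F → ℝ` (E a right ℍ-module, F a left ℍ-module,
both real vector spaces with compatible actions) is the real part of a left and right
ℍ-linear form `Ψ : F × E → ℍ`. -/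
theorem balanced_bilinear_form_is_re_of_H_linear_form
    (E F : Type*) [AddCommGroup E] [AddCommGroup F]
    [Module ℝ E] [Module ℝ F]
    [Module (Quaternion ℝ)ᵐᵒᵖ E] [Module (Quaternion ℝ) F]
    [IsScalarTower ℝ (Quaternion ℝ)ᵐᵒᵖ E] [IsScalarTower ℝ (Quaternion ℝ) F]
    (Φ : E × F → ℝ)
    (hadd₁ : ∀ (x₁ x₂ : E) (y : F), Φ (x₁ + x₂, y) = Φ (x₁, y) + Φ (x₂, y))
    (hadd₂ : ∀ (x : E) (y₁ y₂ : F), Φ (x, y₁ + y₂) = Φ (x, y₁) + Φ (x, y₂))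
    (hbal : ∀ (q : Quaternion ℝ) (x : E) (y : F),
      Φ (MulOpposite.op q • x, y) = Φ (x, q • y))
    (hr₁ : ∀ (r : ℝ) (x : E) (y : F), r * Φ (x, y) = Φ (r • x, y))
    (hr₂ : ∀ (r : ℝ) (x : E) (y : F), r * Φ (x, y) = Φ (x, r • y)) :
    ∃ Ψ : F × E → Quaternion ℝ,
      (∀ (y₁ y₂ : F) (x : E), Ψ (y₁ + y₂, x) = Ψ (y₁, x) + Ψ (y₂, x)) ∧
      (∀ (y : F) (x₁ x₂ : E), Ψ (y, x₁ + x₂) = Ψ (y, x₁) + Ψ (y, x₂)) ∧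
      (∀ (q : Quaternion ℝ) (y : F) (x : E), Ψ (q • y, x) = q * Ψ (y, x)) ∧
      (∀ (q : Quaternion ℝ) (y : F) (x : E),
        Ψ (y, MulOpposite.op q • x) = Ψ (y, x) * q) ∧
      (∀ (x : E) (y : F), Φ (x, y) = (Ψ (y, x)).re) :=
  balanced_bilinear_form_is_re_of_H_linear_form_general E F Φ hadd₁ hadd₂ hbal hr₂
end

section
/- For every matrix A ∈ M_n(ℍ), all coefficients of the characteristic polynomial of its companion matrix χ_A ∈ M_{2n}(ℂ) are real; equivalently, applying entrywise complex conjugation to the coefficients of the characteristic polynomial of χ_A leaves it unchanged, so the complex eigenvalues of χ_A occur in conjugate pairs. -/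
/-! Conjugating `χ_A` by `J = [[0, -1], [1, 0]]` swaps its block rows and columns up to sign, which
amounts to conjugating every entry (this is `j α = conj α j` in `ℍ`). So `χ_A` is similar to its
entrywise conjugate, whose characteristic polynomial is the conjugate one; the coefficients are
therefore fixed by conjugation, i.e. real, and the roots come in conjugate pairs. -/

open Matrix Polynomial

/-- The first complex component of a quaternion `q = α + β j`:  `α = re + imI * i`. -/
noncomputable def qC1 (q : Quaternion ℝ) : ℂ := ⟨q.re, q.imI⟩

/-- The second complex component of a quaternion `q = α + β j`:  `β = imJ + imK * i`. -/
noncomputable def qC2 (q : Quaternion ℝ) : ℂ := ⟨q.imJ, q.imK⟩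

/-- The companion matrix `χ_A = [[A₁, A₂], [-conj A₂, conj A₁]]` of a quaternionic matrix
`A = A₁ + A₂ j`. -/
noncomputable def companion {n : ℕ} (A : Matrix (Fin n) (Fin n) (Quaternion ℝ)) :
    Matrix (Fin n ⊕ Fin n) (Fin n ⊕ Fin n) ℂ :=
  Matrix.fromBlocks (A.map qC1) (A.map qC2)
    (-(A.map fun q => (starRingEnd ℂ) (qC2 q))) (A.map fun q => (starRingEnd ℂ) (qC1 q))

/-- `lam` is a family of standard eigenvalues of the quaternionic matrix `A`: each has
nonnegative imaginary part and the characteristic polynomial of `χ_A` is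
`∏ k, (X - λ k) (X - conj (λ k))`. -/
noncomputable def IsStdEigenvalues {n : ℕ} (A : Matrix (Fin n) (Fin n) (Quaternion ℝ))
    (lam : Fin n → ℂ) : Prop :=
  (∀ k, 0 ≤ (lam k).im) ∧
    (companion A).charpoly =
      ∏ k, ((X - C (lam k)) * (X - C ((starRingEnd ℂ) (lam k))))

theorem Polynomial.isRoot_apply_iff_of_map_eq {R : Type*} [Semiring R] {f : R →+* R}
    (hf : Function.Injective f) {p : R[X]} (hp : p.map f = p) (z : R) :
    p.IsRoot (f z) ↔ p.IsRoot z := by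
  rw [IsRoot.def, ← hp, eval_map_apply, map_eq_zero_iff f hf, hp, IsRoot.def]

theorem Polynomial.coeff_im_eq_zero_of_map_conj {p : ℂ[X]} (hp : p.map (starRingEnd ℂ) = p)
    (k : ℕ) : (p.coeff k).im = 0 := by
  rw [← Complex.conj_eq_iff_im, ← coeff_map, hp]

theorem Matrix.charpoly_conj_of_isUnit {m R : Type*} [Fintype m] [DecidableEq m] [CommRing R]
    {P : Matrix m m R} (hP : IsUnit P) (N : Matrix m m R) :
    (P * N * P⁻¹).charpoly = N.charpoly := by
  simpa only [hP.unit_spec] using charpoly_units_conj hP.unit N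

theorem companion_map_conj {n : ℕ} (A : Matrix (Fin n) (Fin n) (Quaternion ℝ)) :
    (companion A).map (starRingEnd ℂ) = J (Fin n) ℂ * companion A * (J (Fin n) ℂ)⁻¹ := by
  rw [J_inv]
  ext (i | i) (j | j) <;> simp [companion, J, fromBlocks_multiply]

theorem charpoly_companion_map_conj {n : ℕ} (A : Matrix (Fin n) (Fin n) (Quaternion ℝ)) :
    (companion A).charpoly.map (starRingEnd ℂ) = (companion A).charpoly := by
  rw [← charpoly_map, companion_map_conj,
    charpoly_conj_of_isUnit ((isUnit_iff_isUnit_det _).mpr (isUnit_det_J _ _))]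

/-- All coefficients of the characteristic polynomial of the companion matrix `χ_A` are real;
equivalently, conjugating the coefficients leaves it unchanged, so its complex eigenvalues
occur in conjugate pairs. -/
theorem charpoly_companion_coeff_real {n : ℕ}
    (A : Matrix (Fin n) (Fin n) (Quaternion ℝ)) :
    (∀ k : ℕ, ((companion A).charpoly.coeff k).im = 0) ∧
    (companion A).charpoly.map (starRingEnd ℂ) = (companion A).charpoly ∧
    (∀ z : ℂ, (companion A).charpoly.IsRoot z ↔
      (companion A).charpoly.IsRoot ((starRingEnd ℂ) z)) := by
  have hconj := charpoly_companion_map_conj A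
  exact ⟨coeff_im_eq_zero_of_map_conj hconj, hconj,
    fun z => (isRoot_apply_iff_of_map_eq (RingHom.injective _) hconj z).symm⟩
end

section
/- Let A ∈ M_n(ℍ) with n ≥ 2 and let λ₁, …, λ_n ∈ ℂ be standard eigenvalues of A. Then the second-order quaternionic trace T_{ℍ,2}(A), defined as the coefficient of z² in the polynomial z ↦ det(I_{2n} − z·χ_A), satisfies T_{ℍ,2}(A) = ∑_{k=1}^n |λ_k|² + 4 ∑_{k=1}^{n−1} ∑_{m=k+1}^{n} Re(λ_k)Re(λ_m). -/
open Matrix Polynomial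

/-- The polynomial `z ↦ det (I - z M)` of a complex square matrix `M`. -/
noncomputable def detPolySub {m : Type*} [Fintype m] [DecidableEq m] (M : Matrix m m ℂ) :
    Polynomial ℂ :=
  Matrix.det ((1 : Matrix m m (Polynomial ℂ)) - (X : Polynomial ℂ) • M.map C)

lemma reverse_prod' {ι : Type*} (s : Finset ι) (f : ι → Polynomial ℂ) :
    (∏ i ∈ s, f i).reverse = ∏ i ∈ s, (f i).reverse := by
  classical
  induction s using Finset.induction_on with
  | empty => simp [reverse]
  | insert a s h ih => simp [Finset.prod_insert h, reverse_mul_of_domain, ih]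

lemma reverse_linear' (a : ℂ) : (X - C a).reverse = 1 - C a * X := by
  simp [reverse, reflect_sub, ← C_mul_X_pow_eq_monomial]

lemma coeffs012' {ι : Type*} (f : ι → ℂ) (s : Finset ι) :
    (∏ i ∈ s, (1 - C (f i) * X)).coeff 0 = 1 ∧
    (∏ i ∈ s, (1 - C (f i) * X)).coeff 1 = -∑ i ∈ s, f i ∧
    (∏ i ∈ s, (1 - C (f i) * X)).coeff 2 =
      ((∑ i ∈ s, f i)^2 - ∑ i ∈ s, (f i)^2) / 2 := by
  classical
  induction s using Finset.induction_on with
  | empty => simp [coeff_one]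
  | insert a s h ih =>
    obtain ⟨h0, h1, h2⟩ := ih
    rw [Finset.prod_insert h]
    set p := ∏ i ∈ s, (1 - C (f i) * X) with hp
    have key : ∀ k : ℕ,
        ((1 - C (f a) * X) * p).coeff (k+1) = p.coeff (k+1) - f a * p.coeff k := by
      intro k
      rw [sub_mul, one_mul, coeff_sub, mul_assoc, coeff_C_mul, coeff_X_mul]
    have key0 : ((1 - C (f a) * X) * p).coeff 0 = p.coeff 0 := by
      rw [sub_mul, one_mul, coeff_sub, mul_assoc, coeff_C_mul, coeff_X_mul_zero,
        mul_zero, sub_zero]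
    refine ⟨by rw [key0, h0], ?_, ?_⟩
    · rw [show (1:ℕ) = 0 + 1 from rfl, key, h1, h0, Finset.sum_insert h]; ring
    · rw [show (2:ℕ) = 1 + 1 from rfl, key, h2, h1, Finset.sum_insert h,
        Finset.sum_insert h]
      ring

lemma sq_sum_aux' {ι : Type*} [LinearOrder ι] (a : ι → ℝ) (s : Finset ι) :
    (∑ k ∈ s, a k)^2 = ∑ k ∈ s, (a k)^2
      + 2 * ∑ k ∈ s, ∑ m ∈ s.filter (k < ·), a k * a m := by
  classical
  induction s using Finset.induction_on_max with
  | empty => simp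
  | insert b s hb ih =>
    have hbs : b ∉ s := fun h => lt_irrefl b (hb b h)
    rw [Finset.sum_insert hbs, Finset.sum_insert hbs, Finset.sum_insert hbs]
    have h1 : (Finset.filter (b < ·) (insert b s)) = ∅ := by
      rw [Finset.filter_insert, if_neg (lt_irrefl b)]
      exact Finset.filter_false_of_mem fun x hx => not_lt.2 (hb x hx).le
    have h3 : ∑ k ∈ s, ∑ m ∈ (insert b s).filter (k < ·), a k * a m
        = ∑ k ∈ s, (a k * a b + ∑ m ∈ s.filter (k < ·), a k * a m) := by
      refine Finset.sum_congr rfl fun k hk => ?_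
      rw [Finset.filter_insert, if_pos (hb k hk),
        Finset.sum_insert (fun h => hbs (Finset.mem_filter.1 h).1)]
    rw [h1, h3, Finset.sum_add_distrib, ← Finset.sum_mul]
    simp only [Finset.sum_empty]
    linear_combination ih

/-- The second-order quaternionic trace, i.e. the coefficient of `z²` in `det(I_{2n} - z χ_A)`,
equals `∑ |λ_k|² + 4 ∑_{k<m} Re(λ_k) Re(λ_m)` over the standard eigenvalues of `A`. -/
theorem second_trace_eq_of_stdEigenvalues {n : ℕ} (hn : 2 ≤ n)
    (A : Matrix (Fin n) (Fin n) (Quaternion ℝ))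
    (lam : Fin n → ℂ) (hlam : IsStdEigenvalues A lam) :
    (detPolySub (companion A)).coeff 2 =
      (((∑ k, Complex.normSq (lam k)) +
        4 * ∑ k, ∑ m ∈ Finset.Ioi k, (lam k).re * (lam m).re : ℝ) : ℂ) := by
  obtain ⟨-, hP⟩ := hlam
  have hdet : detPolySub (companion A) = ((companion A).charpoly).reverse :=
    ((companion A).reverse_charpoly).symm
  set c : Fin n ⊕ Fin n → ℂ := Sum.elim lam (fun k => (starRingEnd ℂ) (lam k)) with hc
  have hprod : detPolySub (companion A) = ∏ i, (1 - C (c i) * X) := by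
    rw [hdet, hP, reverse_prod', Fintype.prod_sum_type, ← Finset.prod_mul_distrib]
    refine Finset.prod_congr rfl fun k _ => ?_
    rw [reverse_mul_of_domain, reverse_linear', reverse_linear']
    rfl
  have hcoeff := (coeffs012' c Finset.univ).2.2
  have hS : (∑ i, c i) = ((∑ k, 2 * (lam k).re : ℝ) : ℂ) := by
    rw [hc, Fintype.sum_sum_type]
    push_cast
    rw [← Finset.sum_add_distrib]
    exact Finset.sum_congr rfl fun k _ => by
      simp only [Sum.elim_inl, Sum.elim_inr]; rw [Complex.add_conj]; push_cast; ring
  have hT : (∑ i, (c i)^2) = ((∑ k, 2 * ((lam k).re^2 - (lam k).im^2) : ℝ) : ℂ) := by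
    rw [hc, Fintype.sum_sum_type]
    push_cast
    rw [← Finset.sum_add_distrib]
    refine Finset.sum_congr rfl fun k _ => ?_
    have h1 : ((starRingEnd ℂ) (lam k))^2 = (starRingEnd ℂ) ((lam k)^2) := (map_pow _ _ _).symm
    rw [Sum.elim_inl, Sum.elim_inr, h1, Complex.add_conj]
    have h2 : ((lam k)^2).re = (lam k).re^2 - (lam k).im^2 := by
      rw [sq, Complex.mul_re]; ring
    rw [h2]; push_cast; ring
  rw [hprod, hcoeff, hS, hT]
  norm_cast
  have key := sq_sum_aux' (fun k => (lam k).re) Finset.univ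
  have hfil : ∀ k : Fin n, Finset.univ.filter (k < ·) = Finset.Ioi k := by
    intro k; ext m; simp
  simp only [hfil] at key
  simp only [Complex.normSq_apply, ← Finset.mul_sum, Finset.sum_sub_distrib,
    Finset.sum_add_distrib, pow_two] at key ⊢
  linear_combination 2 * key
end

section
/- Let 0 < p < ∞ and let ν : ℕ → ℂ satisfy ∑_n |ν_n|^p < ∞. Suppose that a : ℕ → ℂ is a sequence such that for every z ∈ ℂ the infinite product ∏_{n=1}^∞ (1 + ν_n z) converges and equals the convergent power series ∑_{n=0}^∞ a_n z^n. Then for every q > p there exists N such that for all n ≥ N one has |a_n| ≤ n^{−n/q}. -/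
/-!
For `0 < s ≤ 1` one has `1 + x ≤ exp (x ^ s / s)`, so `(ν_n) ∈ ℓ^s` gives the growth bound
`|∏ (1 + ν_n z)| ≤ exp (B |z|^s)`, and Cauchy's estimate on the circle `|z| = r` yields
`|a_n| ≤ exp (B r^s) / r^n`; choosing `r = n^{1/t}` with `s < t < q` gives `|a_n| ≤ n^{-n/q}`.
For `q ≤ 1` take `s ∈ (p, q)`, using `ℓ^p ⊆ ℓ^s`. For `q > 1` take `s = 1`: unconditional convergence
of the product to a nonzero value for small `z` (it is `1` at `z = 0`) forces `(ν_n) ∈ ℓ¹`,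
since the tail products are bounded and `|1 + w| ≥ 1 + Re w`.
-/

open Filter Finset Topology Real

lemma summable_norm_rpow_of_le {ι E : Type*} [NormedAddCommGroup E] {f : ι → E} {p s : ℝ}
    (hp : 0 < p) (hps : p ≤ s) (h : Summable fun i => ‖f i‖ ^ p) :
    Summable fun i => ‖f i‖ ^ s := by
  have hs : 0 < s := hp.trans_le hps
  have hf : Memℓp f (ENNReal.ofReal p) :=
    (memℓp_gen_iff (by rwa [ENNReal.toReal_ofReal hp.le])).mpr (by simpa [hp.le] using h)
  simpa [hs.le] using (memℓp_gen_iff (by rwa [ENNReal.toReal_ofReal hs.le])).mp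
    (hf.of_exponent_ge (ENNReal.ofReal_le_ofReal hps))

lemma one_add_sum_le_prod_one_add {ι : Type*} (s : Finset ι) {x : ι → ℝ}
    (hx : ∀ i ∈ s, 0 ≤ x i) : 1 + ∑ i ∈ s, x i ≤ ∏ i ∈ s, (1 + x i) := by
  induction s using Finset.cons_induction with
  | empty => simp
  | cons a s _ ih =>
    rw [sum_cons, prod_cons]
    have hxa := hx a (mem_cons_self a s)
    have ih := ih fun i hi => hx i (mem_cons_of_mem hi)
    have hsum : 0 ≤ ∑ i ∈ s, x i := sum_nonneg fun i hi => hx i (mem_cons_of_mem hi)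
    nlinarith

lemma HasProd.exists_norm_prod_le {ι K : Type*} [NormedField K] {f : ι → K} {P : K}
    (h : HasProd f P) (hP : P ≠ 0) :
    ∃ F₀ : Finset ι, ∀ G : Finset ι, Disjoint G F₀ → ‖∏ i ∈ G, f i‖ ≤ 3 := by
  classical
  have hP' : 0 < ‖P‖ := norm_pos_iff.mpr hP
  obtain ⟨F₀, hF₀⟩ := eventually_atTop.mp
    (h.eventually (Metric.ball_mem_nhds P (half_pos hP')))
  refine ⟨F₀, fun G hG => ?_⟩
  have near : ∀ F, F₀ ⊆ F → ‖P‖ / 2 < ‖∏ i ∈ F, f i‖ ∧ ‖∏ i ∈ F, f i‖ < 3 * ‖P‖ / 2 := by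
    intro F hF
    have := mem_ball_iff_norm.mp (hF₀ F hF)
    have h1 := norm_sub_norm_le (∏ i ∈ F, f i) P
    have h2 := norm_sub_norm_le P (∏ i ∈ F, f i)
    rw [norm_sub_rev] at h2
    constructor <;> linarith
  have hsplit : ‖∏ i ∈ F₀ ∪ G, f i‖ = ‖∏ i ∈ F₀, f i‖ * ‖∏ i ∈ G, f i‖ := by
    rw [prod_union hG.symm, norm_mul]
  obtain ⟨hlo, -⟩ := near F₀ le_rfl
  obtain ⟨-, hhi⟩ := near (F₀ ∪ G) subset_union_left
  nlinarith [norm_nonneg (∏ i ∈ G, f i)]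

lemma HasProd.summable_max_re {ι : Type*} {w : ι → ℂ} {P : ℂ}
    (h : HasProd (fun i => 1 + w i) P) (hP : P ≠ 0) :
    Summable fun i => max (w i).re 0 := by
  classical
  obtain ⟨F₀, hF₀⟩ := h.exists_norm_prod_le hP
  refine summable_of_sum_le (c := ∑ i ∈ F₀, max (w i).re 0 + 2)
    (fun i => le_max_right _ _) fun G => ?_
  set H := (G \ F₀).filter fun i => 0 ≤ (w i).re
  have tail : ∑ i ∈ G \ F₀, max (w i).re 0 ≤ 2 := by
    have hH : ∑ i ∈ G \ F₀, max (w i).re 0 = ∑ i ∈ H, (w i).re := by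
      rw [sum_filter]
      refine sum_congr rfl fun i _ => ?_
      split_ifs with hi
      · exact max_eq_left hi
      · exact max_eq_right (not_le.mp hi).le
    calc ∑ i ∈ G \ F₀, max (w i).re 0
        = ∑ i ∈ H, (w i).re := hH
      _ ≤ ∏ i ∈ H, (1 + (w i).re) - 1 := by
          linarith [one_add_sum_le_prod_one_add H (x := fun i => (w i).re)
            fun i hi => (mem_filter.mp hi).2]
      _ ≤ ∏ i ∈ H, ‖1 + w i‖ - 1 := by
          refine sub_le_sub_right (prod_le_prod (fun i hi => ?_) fun i _ => ?_) 1
          · linarith [(mem_filter.mp hi).2]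
          · simpa using Complex.re_le_norm (1 + w i)
      _ ≤ 3 - 1 := by
          rw [← norm_prod]
          gcongr
          exact hF₀ H (disjoint_of_subset_left (filter_subset _ _) sdiff_disjoint)
      _ = 2 := by norm_num
  calc ∑ i ∈ G, max (w i).re 0
      ≤ ∑ i ∈ F₀ ∪ (G \ F₀), max (w i).re 0 :=
        sum_le_sum_of_subset_of_nonneg (by rw [union_sdiff_self_eq_union]; exact subset_union_right)
          fun _ _ _ => le_max_right _ _
    _ = ∑ i ∈ F₀, max (w i).re 0 + ∑ i ∈ G \ F₀, max (w i).re 0 := sum_union disjoint_sdiff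
    _ ≤ _ := by linarith

lemma summable_norm_of_eventually_hasProd_ne_zero {ι : Type*} {ν : ι → ℂ}
    (h : ∀ᶠ u in 𝓝 (0 : ℂ), ∃ P ≠ 0, HasProd (fun i => 1 + ν i * u) P) :
    Summable fun i => ‖ν i‖ := by
  obtain ⟨ε, hε, hball⟩ := Metric.eventually_nhds_iff.mp h
  set t := ε / 2
  have ht : 0 < t := half_pos hε
  have hmax : ∀ u : ℂ, ‖u‖ = t → Summable fun i => max (ν i * u).re 0 := fun u hu => by
    obtain ⟨P, hP, hprod⟩ := hball (by rw [dist_zero_right, hu]; exact half_lt_self hε)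
    exact hprod.summable_max_re hP
  have hnorm {u : ℂ} (hu : ‖u‖ = 1) : ‖u * t‖ = t := by simp [hu, abs_of_pos ht]
  -- Testing the four directions `±t`, `±tI` recovers `|Re ν i|` and `|Im ν i|`.
  have hbound : ∀ i, t * ‖ν i‖ ≤ (max (ν i * (1 * t)).re 0 + max (ν i * (-1 * t)).re 0) +
      (max (ν i * (-Complex.I * t)).re 0 + max (ν i * (Complex.I * t)).re 0) := by
    intro i
    have e1 : (ν i * (1 * t)).re = (ν i).re * t := by simp
    have e2 : (ν i * (-1 * t)).re = -((ν i).re * t) := by simp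
    have e3 : (ν i * (-Complex.I * t)).re = (ν i).im * t := by simp [Complex.mul_re]
    have e4 : (ν i * (Complex.I * t)).re = -((ν i).im * t) := by simp [Complex.mul_re]
    rw [e1, e2, e3, e4, max_zero_add_max_neg_zero_eq_abs_self,
      max_zero_add_max_neg_zero_eq_abs_self, abs_mul, abs_mul, abs_of_pos ht, ← add_mul,
      mul_comm]
    exact mul_le_mul_of_nonneg_right (Complex.norm_le_abs_re_add_abs_im (ν i)) ht.le
  have hsum := Summable.of_nonneg_of_le (fun i => by positivity) hbound
    (((hmax _ (hnorm (by simp))).add (hmax _ (hnorm (by simp)))).add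
      ((hmax _ (hnorm (by simp))).add (hmax _ (hnorm (by simp)))))
  exact (summable_mul_left_iff ht.ne').mp hsum

lemma one_add_le_exp_rpow_div {s x : ℝ} (hs0 : 0 < s) (hs1 : s ≤ 1) (hx : 0 ≤ x) :
    1 + x ≤ exp (x ^ s / s) := by
  have hsub : (1 + x) ^ s ≤ exp (x ^ s) := by
    calc (1 + x) ^ s ≤ 1 ^ s + x ^ s := rpow_add_le_add_rpow zero_le_one hx hs0.le hs1
      _ = x ^ s + 1 := by rw [one_rpow, add_comm]
      _ ≤ exp (x ^ s) := add_one_le_exp _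
  calc 1 + x = ((1 + x) ^ s) ^ s⁻¹ := (rpow_rpow_inv (by linarith) hs0.ne').symm
    _ ≤ exp (x ^ s) ^ s⁻¹ := by gcongr
    _ = exp (x ^ s / s) := by rw [← exp_mul, div_eq_mul_inv]

lemma norm_tprod_one_add_mul_le {ι : Type*} {s : ℝ} (hs0 : 0 < s) (hs1 : s ≤ 1) {ν : ι → ℂ}
    (hν : Summable fun i => ‖ν i‖ ^ s) {z : ℂ} (hz : Multipliable fun i => 1 + ν i * z) :
    ‖∏' i, (1 + ν i * z)‖ ≤ exp ((∑' i, ‖ν i‖ ^ s) * ‖z‖ ^ s / s) := by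
  refine le_of_tendsto' hz.hasProd.norm fun F => ?_
  calc ∏ i ∈ F, ‖1 + ν i * z‖
      ≤ ∏ i ∈ F, exp (‖ν i‖ ^ s * ‖z‖ ^ s / s) := by
        refine prod_le_prod (fun _ _ => norm_nonneg _) fun i _ => ?_
        calc ‖1 + ν i * z‖ ≤ 1 + ‖ν i * z‖ := by simpa using norm_add_le (1 : ℂ) (ν i * z)
          _ ≤ exp (‖ν i * z‖ ^ s / s) := one_add_le_exp_rpow_div hs0 hs1 (norm_nonneg _)
          _ = exp (‖ν i‖ ^ s * ‖z‖ ^ s / s) := by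
              rw [norm_mul, mul_rpow (norm_nonneg _) (norm_nonneg _)]
    _ = exp ((∑ i ∈ F, ‖ν i‖ ^ s) * ‖z‖ ^ s / s) := by rw [← exp_sum, sum_mul, sum_div]
    _ ≤ exp ((∑' i, ‖ν i‖ ^ s) * ‖z‖ ^ s / s) := by
        gcongr
        exact hν.sum_le_tsum F fun i _ => by positivity

lemma hasFPowerSeriesOnBall_ofScalars_of_hasSum {a : ℕ → ℂ} {f : ℂ → ℂ}
    (h : ∀ z, HasSum (fun n => a n * z ^ n) (f z)) :
    HasFPowerSeriesOnBall f (FormalMultilinearSeries.ofScalars ℂ a) 0 ⊤ := by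
  have hrad : (FormalMultilinearSeries.ofScalars ℂ a).radius = ⊤ := by
    refine FormalMultilinearSeries.radius_eq_top_of_summable_norm _ fun r => ?_
    refine ((h r).summable.norm).congr fun n => ?_
    simp
  refine ⟨hrad.ge, by simp, fun {y} _ => ?_⟩
  simpa [FormalMultilinearSeries.ofScalars_apply_eq, mul_comm] using h y

lemma norm_coeff_le_of_hasSum {a : ℕ → ℂ} {f : ℂ → ℂ}
    (h : ∀ z, HasSum (fun n => a n * z ^ n) (f z)) {r M : ℝ} (hr : 0 < r)
    (hM : ∀ z, ‖z‖ = r → ‖f z‖ ≤ M) (n : ℕ) : ‖a n‖ ≤ M / r ^ n := by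
  have hf := hasFPowerSeriesOnBall_ofScalars_of_hasSum h
  have hdiff : Differentiable ℂ f := fun z => (hf.analyticAt_of_mem (by simp)).differentiableAt
  have hcoeff : a n = iteratedDeriv n f 0 / n.factorial := by
    have := hf.hasFPowerSeriesAt.eq_formalMultilinearSeries hf.analyticAt.hasFPowerSeriesAt
    simpa using congrArg (fun p => p.coeff n) this
  have hfact : (0 : ℝ) < n.factorial := by positivity
  rw [hcoeff, norm_div, Complex.norm_natCast, div_le_iff₀ hfact, div_mul_eq_mul_div, mul_comm]
  exact Complex.norm_iteratedDeriv_le_of_forall_mem_sphere_norm_le n hr hdiff.diffContOnCl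
    fun z hz => hM z (by simpa using hz)

lemma eventually_mul_rpow_le_mul_self {B ρ κ : ℝ} (hρ : ρ < 1) (hκ : 0 < κ) :
    ∀ᶠ x : ℝ in atTop, B * x ^ ρ ≤ κ * x := by
  have hlim : Tendsto (fun x : ℝ => B * x ^ (ρ - 1)) atTop (𝓝 0) := by
    simpa using (tendsto_rpow_neg_atTop (sub_pos.mpr hρ)).const_mul B
  filter_upwards [hlim.eventually_le_const hκ, eventually_gt_atTop 0] with x hx hx0
  calc B * x ^ ρ = B * x ^ (ρ - 1) * x := by
        rw [mul_assoc, ← rpow_add_one hx0.ne', sub_add_cancel]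
    _ ≤ κ * x := by gcongr

lemma eventually_le_rpow_of_le_exp_rpow_div {c : ℕ → ℝ} {B s q : ℝ} (hs : 0 < s) (hsq : s < q)
    (h : ∀ n : ℕ, ∀ r : ℝ, 0 < r → c n ≤ exp (B * r ^ s) / r ^ n) :
    ∀ᶠ n : ℕ in atTop, c n ≤ (n : ℝ) ^ (-(n : ℝ) / q) := by
  -- Take `r = n ^ (1 / t)` for some `s < t < q`; then `exp (B * r ^ s) = exp (o(n))` while
  -- `r ^ (-n) = n ^ (-n / t)` beats `n ^ (-n / q)` by the factor `n ^ (κ n)`.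
  obtain ⟨t, hst, htq⟩ := exists_between hsq
  have ht : 0 < t := hs.trans hst
  set κ := t⁻¹ - q⁻¹
  have hκ : 0 < κ := sub_pos.mpr (inv_strictAnti₀ ht htq)
  have hreal : ∀ᶠ x : ℝ in atTop, B * x ^ (s / t) ≤ κ * x ∧ 1 ≤ log x ∧ 0 < x :=
    (eventually_mul_rpow_le_mul_self ((div_lt_one ht).mpr hst) hκ).and
      ((tendsto_log_atTop.eventually_ge_atTop 1).and (eventually_gt_atTop 0))
  filter_upwards [tendsto_natCast_atTop_atTop.eventually hreal] with n ⟨hlin, hlog, hx⟩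
  rw [rpow_def_of_pos hx] at hlin ⊢
  set L := log n
  have hr := h n (exp (L / t)) (exp_pos _)
  rw [← exp_mul, ← exp_nat_mul, ← exp_sub, show L / t * s = L * (s / t) by ring] at hr
  refine hr.trans (exp_le_exp.mpr ?_)
  have hκn : κ * n ≤ κ * n * L := le_mul_of_one_le_right (by positivity) hlog
  have : n * (L / t) + L * (-n / q) = κ * n * L := by ring
  linarith

lemma eventually_norm_coeff_le_of_summable_rpow {ι : Type*} {s q : ℝ} (hs0 : 0 < s) (hs1 : s ≤ 1)
    (hsq : s < q) {ν : ι → ℂ} {a : ℕ → ℂ} (hν : Summable fun i => ‖ν i‖ ^ s)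
    (hmul : ∀ z : ℂ, Multipliable fun i => 1 + ν i * z)
    (hrep : ∀ z : ℂ, HasSum (fun n => a n * z ^ n) (∏' i, (1 + ν i * z))) :
    ∀ᶠ n : ℕ in atTop, ‖a n‖ ≤ (n : ℝ) ^ (-(n : ℝ) / q) := by
  refine eventually_le_rpow_of_le_exp_rpow_div (B := (∑' i, ‖ν i‖ ^ s) / s) hs0 hsq
    fun n r hr => norm_coeff_le_of_hasSum hrep hr (fun z hz => ?_) n
  rw [← hz, div_mul_eq_mul_div]
  exact norm_tprod_one_add_mul_le hs0 hs1 hν (hmul z)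

/-- If `(ν_n) ∈ ℓ^p` and the entire function `∏_n (1 + ν_n z)` is represented on all of `ℂ`
by the power series `∑_n a_n zⁿ`, then for every `q > p` one has `|a_n| ≤ n^{-n/q}` for all
sufficiently large `n`. -/
theorem coeff_bound_of_lp_product (p : ℝ) (hp : 0 < p) (ν a : ℕ → ℂ)
    (hν : Summable fun n => ‖ν n‖ ^ p)
    (hmul : ∀ z : ℂ, Multipliable fun n => 1 + ν n * z)
    (hrep : ∀ z : ℂ, HasSum (fun n => a n * z ^ n) (∏' n, (1 + ν n * z))) :
    ∀ q : ℝ, p < q → ∃ N : ℕ, ∀ n : ℕ, N ≤ n →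
      ‖a n‖ ≤ (n : ℝ) ^ (-(n : ℝ) / q) := by
  intro q hq
  obtain ⟨s, hs0, hs1, hsq, hνs⟩ : ∃ s, 0 < s ∧ s ≤ 1 ∧ s < q ∧ Summable fun n => ‖ν n‖ ^ s := by
    rcases le_or_gt q 1 with hq1 | hq1
    · exact ⟨(p + q) / 2, by linarith, by linarith, by linarith,
        summable_norm_rpow_of_le hp (by linarith) hν⟩
    · have hcont : ContinuousAt (fun z => ∏' n, (1 + ν n * z)) 0 :=
        ((hasFPowerSeriesOnBall_ofScalars_of_hasSum hrep).analyticAt_of_mem (by simp)).continuousAt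
      have hne : ∀ᶠ z in 𝓝 (0 : ℂ), ∏' n, (1 + ν n * z) ≠ 0 :=
        hcont.eventually_ne (by simp)
      have hl1 : Summable fun n => ‖ν n‖ := summable_norm_of_eventually_hasProd_ne_zero <|
        hne.mono fun z hz => ⟨_, hz, (hmul z).hasProd⟩
      exact ⟨1, one_pos, le_rfl, hq1, by simpa using hl1⟩
  exact eventually_atTop.mp (eventually_norm_coeff_le_of_summable_rpow hs0 hs1 hsq hνs hmul hrep)
end

section
/- Let A ∈ M_n(ℍ) and let λ₁, …, λ_n ∈ ℂ be standard eigenvalues of A. Then for every z ∈ ℂ, |det_ℍ(I + zA)| = |det(I_{2n} + z·χ_A)| ≤ exp(2|z| ∑_{k=1}^n |λ_k|). -/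
/-! Expanding the characteristic polynomial of `χ_A` gives
`det (1 + z χ_A) = ∏ₖ (1 + z λₖ) (1 + z conj λₖ)`, and each factor `1 + w` has norm at most
`1 + ‖w‖ ≤ exp ‖w‖`. -/

open Matrix Polynomial

theorem Matrix.det_one_add_smul_of_charpoly_eq_prod {K m ι : Type*} [Field K] [Fintype m]
    [DecidableEq m] {B : Matrix m m K} {s : Finset ι} {μ : ι → K}
    (hB : B.charpoly = ∏ i ∈ s, (X - C (μ i))) (z : K) :
    (1 + z • B).det = ∏ i ∈ s, (1 + z * μ i) := by
  rcases eq_or_ne z 0 with rfl | hz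
  · simp
  have hcard : Fintype.card m = s.card := by
    rw [← B.charpoly_natDegree_eq_dim, hB, natDegree_finsetProd_X_sub_C_eq_card]
  have hscale : 1 + z • B = (-z) • (scalar m (-z⁻¹) - B) := by
    rw [smul_sub, scalar_apply, ← smul_one_eq_diagonal, smul_smul, neg_mul_neg,
      mul_inv_cancel₀ hz, one_smul, neg_smul, sub_neg_eq_add]
  rw [hscale, det_smul, ← eval_charpoly, hB, eval_prod, hcard, ← Finset.prod_const,
    ← Finset.prod_mul_distrib]
  refine Finset.prod_congr rfl fun i _ => ?_
  simp only [eval_sub, eval_X, eval_C]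
  field_simp
  ring

theorem norm_prod_one_add_le_exp_sum {R ι : Type*} [NormedCommRing R] [NormOneClass R]
    (s : Finset ι) (w : ι → R) :
    ‖∏ i ∈ s, (1 + w i)‖ ≤ Real.exp (∑ i ∈ s, ‖w i‖) :=
  calc ‖∏ i ∈ s, (1 + w i)‖ ≤ ∏ i ∈ s, (1 + ‖w i‖) :=
        (Finset.norm_prod_le _ _).trans <| Finset.prod_le_prod (fun _ _ => norm_nonneg _)
          fun i _ => (norm_add_le _ _).trans_eq (by rw [norm_one])
    _ ≤ Real.exp (∑ i ∈ s, ‖w i‖) := Real.prod_one_add_le_exp_sum s fun _ => norm_nonneg _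

/-- Exponential bound on the quaternionic Fredholm determinant:
`|det(I_{2n} + z χ_A)| ≤ exp(2 |z| ∑_k |λ_k|)` over the standard eigenvalues of `A`. -/
theorem abs_det_companion_le {n : ℕ} (A : Matrix (Fin n) (Fin n) (Quaternion ℝ))
    (lam : Fin n → ℂ) (hlam : IsStdEigenvalues A lam) (z : ℂ) :
    ‖Matrix.det (1 + z • companion A)‖ ≤
      Real.exp (2 * ‖z‖ * ∑ k, ‖lam k‖) := by
  obtain ⟨-, hcharpoly⟩ := hlam
  set μ : Fin n ⊕ Fin n → ℂ := Sum.elim lam (starRingEnd ℂ ∘ lam)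
  have hμ : (companion A).charpoly = ∏ i, (X - C (μ i)) := by
    rw [hcharpoly, Fintype.prod_sum_type, ← Finset.prod_mul_distrib]
    rfl
  rw [det_one_add_smul_of_charpoly_eq_prod hμ]
  calc ‖∏ i, (1 + z * μ i)‖ ≤ Real.exp (∑ i, ‖z * μ i‖) := norm_prod_one_add_le_exp_sum _ _
    _ = Real.exp (2 * ‖z‖ * ∑ k, ‖lam k‖) := by
      simp only [μ, norm_mul, ← Finset.mul_sum, Fintype.sum_sum_type, Sum.elim_inl, Sum.elim_inr,
        Function.comp_apply, RCLike.norm_conj]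
      ring_nf
end

section
/- Let μ : {1,…,n} → ℝ with μ_k ≥ 0, and let D = (d_{kℓ}) ∈ M_n(ℍ) with quaternionic norm |d_{kℓ}| ≤ 1 for all k, ℓ. Define A ∈ M_n(ℍ) by a_{kℓ} = μ_k d_{kℓ}. Then for every 0 ≤ k ≤ 2n, the absolute value of the coefficient of z^k in the polynomial z ↦ det(I_{2n} + z·χ_A) is at most 2^k · k^{k/2} times the coefficient of z^k in the real polynomial ∏_{i=1}^n (1 + μ_i z)² (with the convention 0^0 = 1). -/
open Matrix Polynomial

/-- The polynomial `z ↦ det (I + z M)` of a complex square matrix `M`. -/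
noncomputable def detPolyAdd {m : Type*} [Fintype m] [DecidableEq m] (M : Matrix m m ℂ) :
    Polynomial ℂ :=
  Matrix.det ((1 : Matrix m m (Polynomial ℂ)) + (X : Polynomial ℂ) • M.map C)

/-!
By the principal-minor expansion, the coefficient of `z^k` in `det (1 + z χ_A)` is the sum of the
`k × k` principal minors of `χ_A`, and `∏_i (1 + μ_i z)²` is the same expansion for the diagonal
matrix `diag (μ, μ)`. Every entry of `χ_A` in the two rows coming from row `i` of `A` has modulus at
most `μ_i`, so it suffices to bound a `k × k` minor by `k^{k/2}` times the product of its row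
bounds. After rescaling the rows this is Hadamard's bound `|det M| ≤ k^{k/2}` for entries of
modulus `≤ 1`: `|det M|²` is the product of the eigenvalues of `MᴴM`, and by AM-GM it is at most
`(tr (MᴴM) / k)^k ≤ k^k`.
-/

open Finset
open scoped ComplexOrder

theorem Real.prod_le_arith_mean_pow {ι : Type*} (s : Finset ι) (z : ι → ℝ)
    (hz : ∀ i ∈ s, 0 ≤ z i) :
    ∏ i ∈ s, z i ≤ ((∑ i ∈ s, z i) / #s) ^ #s := by
  rcases s.eq_empty_or_nonempty with rfl | hs
  · simp
  have hcard : (0 : ℝ) < #s := by exact_mod_cast hs.card_pos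
  have amgm := Real.geom_mean_le_arith_mean s (fun _ ↦ 1) z (fun _ _ ↦ zero_le_one)
    (by simpa using hcard) hz
  simp only [Real.rpow_one, sum_const, nsmul_eq_mul, mul_one, one_mul] at amgm
  calc ∏ i ∈ s, z i = ((∏ i ∈ s, z i) ^ (#s : ℝ)⁻¹) ^ #s := by
        rw [← Real.rpow_natCast, ← Real.rpow_mul (prod_nonneg hz), inv_mul_cancel₀ hcard.ne',
          Real.rpow_one]
    _ ≤ ((∑ i ∈ s, z i) / #s) ^ #s :=
        pow_le_pow_left₀ (Real.rpow_nonneg (prod_nonneg hz) _) amgm _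

theorem Polynomial.coeff_prod_one_add_C_mul_X {R ι : Type*} [CommRing R] [Fintype ι]
    [DecidableEq ι] (c : ι → R) (k : ℕ) :
    (∏ i, (1 + C (c i) * X)).coeff k = ∑ s ∈ univ.powersetCard k, ∏ i ∈ s, c i := by
  have hdet : ∏ i, (1 + C (c i) * X) = det (1 + (X : R[X]) • (diagonal c).map C) := by
    rw [diagonal_map (map_zero C), ← diagonal_smul, ← diagonal_one, diagonal_add, det_diagonal]
    simp only [Pi.smul_apply, smul_eq_mul, mul_comm]
  rw [hdet, coeff_det_one_add_X_smul_eq_sum_minors]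
  refine sum_congr rfl fun s _ ↦ ?_
  rw [submatrix_diagonal _ _ Subtype.val_injective, det_diagonal]
  exact prod_coe_sort s c

namespace Matrix

variable {𝕜 m n : Type*} [RCLike 𝕜] [Fintype m] [Fintype n]

theorem trace_conjTranspose_mul_self_eq_sum (M : Matrix m n 𝕜) :
    (Mᴴ * M).trace = ∑ i, ∑ j, ((‖M i j‖ ^ 2 : ℝ) : 𝕜) := by
  rw [trace, sum_comm]
  refine sum_congr rfl fun j _ ↦ sum_congr rfl fun i _ ↦ ?_
  simp [RCLike.conj_mul]

theorem norm_det_sq_le [DecidableEq n] (M : Matrix n n 𝕜) :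
    ‖M.det‖ ^ 2 ≤ ((∑ i, ∑ j, ‖M i j‖ ^ 2) / Fintype.card n) ^ Fintype.card n := by
  have hG := posSemidef_conjTranspose_mul_self M
  have hdet : ‖M.det‖ ^ 2 = ∏ i, hG.isHermitian.eigenvalues i := by
    apply RCLike.ofReal_injective (K := 𝕜)
    rw [RCLike.ofReal_prod, ← hG.isHermitian.det_eq_prod_eigenvalues, det_mul,
      det_conjTranspose, RCLike.star_def, RCLike.conj_mul, RCLike.ofReal_pow]
  have htrace : ∑ i, ∑ j, ‖M i j‖ ^ 2 = ∑ i, hG.isHermitian.eigenvalues i := by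
    apply RCLike.ofReal_injective (K := 𝕜)
    simp only [RCLike.ofReal_sum]
    rw [← hG.isHermitian.trace_eq_sum_eigenvalues, trace_conjTranspose_mul_self_eq_sum]
  rw [hdet, htrace]
  exact Real.prod_le_arith_mean_pow _ _ fun i _ ↦ hG.eigenvalues_nonneg i

theorem norm_det_le_of_norm_le_one [DecidableEq n] (M : Matrix n n 𝕜)
    (hM : ∀ i j, ‖M i j‖ ≤ 1) :
    ‖M.det‖ ≤ (Fintype.card n : ℝ) ^ ((Fintype.card n : ℝ) / 2) := by
  set k := Fintype.card n
  have hsum : ∑ i, ∑ j, ‖M i j‖ ^ 2 ≤ k * k := by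
    calc ∑ i, ∑ j, ‖M i j‖ ^ 2 ≤ ∑ _i : n, ∑ _j : n, (1 : ℝ) := by
          gcongr with i _ j _
          exact pow_le_one₀ (norm_nonneg _) (hM i j)
      _ = k * k := by simp [k]
  have hsq : ‖M.det‖ ^ 2 ≤ ((k : ℝ) ^ ((k : ℝ) / 2)) ^ 2 := by
    rw [← Real.rpow_natCast ((k : ℝ) ^ _) 2, ← Real.rpow_mul k.cast_nonneg, Nat.cast_ofNat,
      div_mul_cancel₀ _ two_ne_zero, Real.rpow_natCast]
    refine (norm_det_sq_le M).trans (pow_le_pow_left₀ (by positivity) ?_ k)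
    exact div_le_of_le_mul₀ k.cast_nonneg k.cast_nonneg hsum
  exact le_of_pow_le_pow_left₀ two_ne_zero (by positivity) hsq

theorem norm_det_le_of_norm_le [DecidableEq n] (M : Matrix n n 𝕜) (c : n → ℝ)
    (hM : ∀ i j, ‖M i j‖ ≤ c i) :
    ‖M.det‖ ≤ (Fintype.card n : ℝ) ^ ((Fintype.card n : ℝ) / 2) * ∏ i, c i := by
  have hc : ∀ i, 0 ≤ c i := fun i ↦ (norm_nonneg _).trans (hM i i)
  -- Where `c i = 0` the row `i` of `M` vanishes, so the junk value `M i j / 0 = 0` is harmless.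
  set M' : Matrix n n 𝕜 := of fun i j ↦ M i j / c i
  have hM' : ∀ i j, ‖M' i j‖ ≤ 1 := fun i j ↦ by
    simpa [M', norm_div, abs_of_nonneg (hc i)] using div_le_one_of_le₀ (hM i j) (hc i)
  have hrow : M = of fun i j ↦ (c i : 𝕜) * M' i j := by
    ext i j
    rcases (hc i).eq_or_lt with hci | hci
    · have : M i j = 0 := norm_le_zero_iff.mp (hci ▸ hM i j)
      simp [this, ← hci]
    · exact (mul_div_cancel₀ (M i j) (RCLike.ofReal_ne_zero.mpr hci.ne')).symm
  rw [hrow, det_mul_column, norm_mul, norm_prod, mul_comm]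
  simp only [RCLike.norm_ofReal, abs_of_nonneg (hc _)]
  exact mul_le_mul_of_nonneg_right (norm_det_le_of_norm_le_one M' hM')
    (prod_nonneg fun i _ ↦ hc i)

theorem norm_coeff_det_one_add_X_smul_le [DecidableEq n] (M : Matrix n n 𝕜) (c : n → ℝ)
    (hM : ∀ i j, ‖M i j‖ ≤ c i) (k : ℕ) :
    ‖(det (1 + (X : 𝕜[X]) • M.map C)).coeff k‖ ≤
      (k : ℝ) ^ ((k : ℝ) / 2) * (∏ i, (1 + C (c i) * X)).coeff k := by
  rw [coeff_det_one_add_X_smul_eq_sum_minors, coeff_prod_one_add_C_mul_X, mul_sum]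
  refine (norm_sum_le _ _).trans (sum_le_sum fun s hs ↦ ?_)
  have hminor := norm_det_le_of_norm_le (M.submatrix Subtype.val Subtype.val)
    (fun i : s ↦ c i) fun i j ↦ hM i j
  rwa [Fintype.card_coe, (mem_powersetCard.mp hs).2, prod_coe_sort s c] at hminor

end Matrix

theorem Quaternion.norm_qC1_le (q : Quaternion ℝ) : ‖qC1 q‖ ≤ ‖q‖ := by
  refine le_of_pow_le_pow_left₀ two_ne_zero (norm_nonneg q) ?_
  rw [Complex.sq_norm, sq, ← Quaternion.normSq_eq_norm_mul_self, qC1, Complex.normSq_mk,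
    Quaternion.normSq_def']
  nlinarith [sq_nonneg q.imJ, sq_nonneg q.imK]

theorem Quaternion.norm_qC2_le (q : Quaternion ℝ) : ‖qC2 q‖ ≤ ‖q‖ := by
  refine le_of_pow_le_pow_left₀ two_ne_zero (norm_nonneg q) ?_
  rw [Complex.sq_norm, sq, ← Quaternion.normSq_eq_norm_mul_self, qC2, Complex.normSq_mk,
    Quaternion.normSq_def']
  nlinarith [sq_nonneg q.re, sq_nonneg q.imI]

theorem norm_companion_apply_le {n : ℕ} (A : Matrix (Fin n) (Fin n) (Quaternion ℝ))
    (c : Fin n → ℝ) (hA : ∀ k ℓ, ‖A k ℓ‖ ≤ c k) (i j : Fin n ⊕ Fin n) :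
    ‖companion A i j‖ ≤ Sum.elim c c i := by
  rcases i with a | a <;> rcases j with b | b <;>
    simp only [companion, fromBlocks_apply₁₁, fromBlocks_apply₁₂, fromBlocks_apply₂₁,
      fromBlocks_apply₂₂, map_apply, Matrix.neg_apply, norm_neg, Complex.norm_conj, Sum.elim_inl,
      Sum.elim_inr]
  · exact (Quaternion.norm_qC1_le _).trans (hA a b)
  · exact (Quaternion.norm_qC2_le _).trans (hA a b)
  · exact (Quaternion.norm_qC2_le _).trans (hA a b)
  · exact (Quaternion.norm_qC1_le _).trans (hA a b)

/-- If `A = (μ_k d_{kℓ})` with `μ_k ≥ 0` and `|d_{kℓ}| ≤ 1`, then for every `k ≤ 2n` the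
coefficient of `z^k` in `det(I_{2n} + z χ_A)` is bounded in absolute value by
`2^k k^{k/2}` times the coefficient of `z^k` in `∏ᵢ (1 + μᵢ z)²`. -/
theorem coeff_det_companion_bound {n : ℕ} (μ : Fin n → ℝ) (hμ : ∀ k, 0 ≤ μ k)
    (D : Matrix (Fin n) (Fin n) (Quaternion ℝ)) (hD : ∀ k ℓ, ‖D k ℓ‖ ≤ 1)
    (A : Matrix (Fin n) (Fin n) (Quaternion ℝ))
    (hA : ∀ k ℓ, A k ℓ = ((μ k : ℝ) : Quaternion ℝ) * D k ℓ) :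
    ∀ k : ℕ, k ≤ 2 * n →
      ‖(detPolyAdd (companion A)).coeff k‖ ≤
        2 ^ k * (k : ℝ) ^ ((k : ℝ) / 2) *
          ((∏ i, (1 + Polynomial.C (μ i) * Polynomial.X) ^ 2 : Polynomial ℝ)).coeff k := by
  intro k _
  have hAμ : ∀ k ℓ, ‖A k ℓ‖ ≤ μ k := fun k ℓ ↦ by
    rw [hA, norm_mul, Quaternion.norm_coe, Real.norm_of_nonneg (hμ k)]
    exact mul_le_of_le_one_right (hμ k) (hD k ℓ)
  have hdouble : ∏ i, (1 + C (μ i) * X) ^ 2 = ∏ j, (1 + C (Sum.elim μ μ j) * X) := by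
    rw [Fintype.prod_sum_type]
    simp only [Sum.elim_inl, Sum.elim_inr, ← prod_mul_distrib, sq]
  have hbound := norm_coeff_det_one_add_X_smul_le (companion A) _
    (norm_companion_apply_le A μ hAμ) k
  rw [← hdouble] at hbound
  rw [mul_assoc]
  exact hbound.trans
    (le_mul_of_one_le_left ((norm_nonneg _).trans hbound) (one_le_pow₀ one_le_two))
end
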